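/- arXiv:2601.13031 — 2 statements merged into one kernel-verified Lean document; each statement's English description precedes it below -/
import Mathlib

section
/- Let q ≥ 2, 0 < p ≤ (q−1)/q, and let N ≥ 2 and 0 ≤ z ≤ N−2 be integers. Define p'(m) as the m-fold piling-up of p (p'(1) = p, p'(m+1) = p'(m) ⊕ p). Then τ(p) := p² / ((q−1)²(1−p)² + (q−1)p²) and τ'(p) := p·p'(N−z−1) / ((q−1)²(1−p)(1−p'(N−z−1)) + (q−1)p·p'(N−z−1)) satisfy τ(p) ≤ τ'(p), with equality when z = N−2. -/
/-- The q-ary piling-up combination of two Bernoulli noise rates. -/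
noncomputable def pplus (q : ℕ) (a b : ℝ) : ℝ :=
  ((q : ℝ) - 1) / q - ((q : ℝ) - 1) / q *
    (1 - (q : ℝ) / ((q : ℝ) - 1) * a) * (1 - (q : ℝ) / ((q : ℝ) - 1) * b)

lemma pplus_eq (q : ℕ) (hq : 2 ≤ q) (a b : ℝ) :
    pplus q a b = a + b - (q : ℝ) / ((q : ℝ) - 1) * a * b := by
  have hq2 : (2 : ℝ) ≤ (q : ℝ) := by exact_mod_cast hq
  have hk : ((q : ℝ) - 1) ≠ 0 := by linarith
  have hq0 : (q : ℝ) ≠ 0 := by linarith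
  unfold pplus
  field_simp
  ring

/-- The reduction noise rate `τ` is at most the concrete-attack noise rate `τ'`,
with equality when `z = N - 2`. -/
theorem tau_le_tau' (q : ℕ) (hq : 2 ≤ q) (p : ℝ)
    (hp0 : 0 < p) (hp1 : p ≤ ((q : ℝ) - 1) / q)
    (N z : ℕ) (hN : 2 ≤ N) (hz : z ≤ N - 2)
    (p' : ℕ → ℝ) (hp'1 : p' 1 = p)
    (hp'rec : ∀ m, 1 ≤ m → p' (m + 1) = pplus q (p' m) p) :
    p ^ 2 / (((q : ℝ) - 1) ^ 2 * (1 - p) ^ 2 + ((q : ℝ) - 1) * p ^ 2)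
      ≤ p * p' (N - z - 1) /
        (((q : ℝ) - 1) ^ 2 * (1 - p) * (1 - p' (N - z - 1)) + ((q : ℝ) - 1) * p * p' (N - z - 1)) ∧
    (z = N - 2 →
      p ^ 2 / (((q : ℝ) - 1) ^ 2 * (1 - p) ^ 2 + ((q : ℝ) - 1) * p ^ 2)
        = p * p' (N - z - 1) /
          (((q : ℝ) - 1) ^ 2 * (1 - p) * (1 - p' (N - z - 1)) + ((q : ℝ) - 1) * p * p' (N - z - 1))) := by
  have hq2 : (2 : ℝ) ≤ (q : ℝ) := by exact_mod_cast hq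
  set k : ℝ := (q : ℝ) - 1 with hkdef
  have hk1 : (1 : ℝ) ≤ k := by simp [hkdef]; linarith
  have hk0 : (0 : ℝ) < k := by linarith
  have hq0 : (0 : ℝ) < (q : ℝ) := by linarith
  have hpq : p * (q : ℝ) ≤ k := by
    rw [div_eq_mul_inv] at hp1
    calc p * (q : ℝ) ≤ k * ((q : ℝ))⁻¹ * (q : ℝ) := by
          apply mul_le_mul_of_nonneg_right hp1 hq0.le
      _ = k := by field_simp
  have hp1' : p < 1 := by
    nlinarith
  -- bounds on p' m
  have key : ∀ m, 1 ≤ m → p ≤ p' m ∧ p' m ≤ k / q := by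
    intro m hm
    induction m, hm using Nat.le_induction with
    | base => exact ⟨hp'1.ge, hp'1.le.trans hp1⟩
    | succ n hn ih =>
      obtain ⟨h1, h2⟩ := ih
      rw [hp'rec n hn, pplus_eq q hq]
      have ha0 : 0 < p' n := lt_of_lt_of_le hp0 h1
      have haq : p' n * (q : ℝ) ≤ k := by
        rw [div_eq_mul_inv] at h2
        calc p' n * (q : ℝ) ≤ k * ((q : ℝ))⁻¹ * (q : ℝ) := by
              apply mul_le_mul_of_nonneg_right h2 hq0.le
          _ = k := by field_simp
      constructor
      · have : (q : ℝ) / k * p' n * p ≤ p' n := by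
          rw [div_mul_eq_mul_div, div_mul_eq_mul_div, div_le_iff₀ hk0]
          nlinarith
        linarith
      · have h := mul_nonneg (sub_nonneg.2 haq) (sub_nonneg.2 hpq)
        rw [← sub_nonneg]
        have heq : k / ↑q - (p' n + p - ↑q / k * p' n * p)
            = (k - p' n * ↑q) * (k - p * ↑q) / (k * ↑q) := by
          field_simp
          ring
        rw [heq]
        exact div_nonneg h (by positivity)
  set m := N - z - 1 with hmdef
  have hm1 : 1 ≤ m := by omega
  obtain ⟨hx1, hx2⟩ := key m hm1
  set x := p' m with hxdef
  have hx0 : 0 < x := lt_of_lt_of_le hp0 hx1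
  have hxq : x * (q : ℝ) ≤ k := by
    rw [div_eq_mul_inv] at hx2
    calc x * (q : ℝ) ≤ k * ((q : ℝ))⁻¹ * (q : ℝ) := by
          apply mul_le_mul_of_nonneg_right hx2 hq0.le
      _ = k := by field_simp
  have hx1' : x < 1 := by nlinarith
  have hD1 : 0 < k ^ 2 * (1 - p) ^ 2 + k * p ^ 2 := by positivity
  have hD2 : 0 < k ^ 2 * (1 - p) * (1 - x) + k * p * x := by
    have h1 : 0 ≤ k ^ 2 * (1 - p) * (1 - x) := by
      apply mul_nonneg (mul_nonneg (by positivity) (by linarith)) (by linarith)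
    nlinarith [mul_pos (mul_pos hk0 hp0) hx0]
  constructor
  · rw [div_le_div_iff₀ hD1 hD2]
    nlinarith [mul_nonneg (mul_nonneg (mul_nonneg (sq_nonneg k) hp0.le)
      (by linarith : (0:ℝ) ≤ 1 - p)) (sub_nonneg.2 hx1)]
  · intro hzN
    have : m = 1 := by omega
    rw [hxdef, this, hp'1]
    ring_nf
end

section
/- Let e₁, …, e_m be independent q-ary Bernoulli(p) random variables over F_q, and suppose the event ∑_{j=1}^m e_j = 0 has positive probability. Then the conditional distribution of e₁ given ∑_{j=1}^m e_j = 0 is a q-ary Bernoulli distribution, namely P(e₁ = x | ∑_{j=1}^m e_j = 0) = p·p'' / ((q−1)²(1−p)(1−p'') + (q−1)·p·p'') for each nonzero x ∈ F_q, where p'' is the (m−1)-fold piling-up of p. -/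
open Finset

/-- Affine form of the q-ary Bernoulli distribution: `1/q + α·(δ₀ x − 1/q)`. -/
noncomputable def berA (F : Type*) [Fintype F] [DecidableEq F] [Zero F] (α : ℝ) (x : F) : ℝ :=
  1/(Fintype.card F : ℝ) + α * ((if x = 0 then 1 else 0) - 1/(Fintype.card F : ℝ))

lemma ber_eq_berA (F : Type*) [Fintype F] [DecidableEq F] [Zero F]
    (hq : 2 ≤ Fintype.card F) (p : ℝ) (x : F) :
    (if x = 0 then 1 - p else p / ((Fintype.card F : ℝ) - 1))
      = berA F (1 - (Fintype.card F : ℝ)/((Fintype.card F : ℝ) - 1) * p) x := by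
  have h0 : (Fintype.card F : ℝ) ≠ 0 := by
    have : (2:ℝ) ≤ Fintype.card F := by exact_mod_cast hq
    linarith
  have h1 : (Fintype.card F : ℝ) - 1 ≠ 0 := by
    have : (2:ℝ) ≤ Fintype.card F := by exact_mod_cast hq
    linarith
  unfold berA
  split <;> field_simp <;> ring

lemma conv (F : Type*) [Fintype F] [DecidableEq F] [AddGroup F] (α β : ℝ) (y : F) :
    ∑ a : F, berA F α a * berA F β (y - a) = berA F (α * β) y := by
  set c : ℝ := 1/(Fintype.card F : ℝ) with hc
  have h1 : ∑ a : F, (if a = 0 then (1:ℝ) else 0) = 1 := by simp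
  have h2 : ∑ a : F, (if y - a = 0 then (1:ℝ) else 0) = 1 := by
    simp [sub_eq_zero]
  have h3 : ∑ a : F, (if a = 0 then (1:ℝ) else 0) * (if y - a = 0 then 1 else 0)
      = if y = 0 then 1 else 0 := by
    rw [Finset.sum_eq_single 0]
    · simp
    · intro b _ hb; simp [hb]
    · simp
  have expand : ∀ a : F, berA F α a * berA F β (y - a)
      = (c*c - α*c*c - β*c*c + α*β*c*c)
        + (α*c - α*β*c) * (if a = 0 then (1:ℝ) else 0)
        + (β*c - α*β*c) * (if y - a = 0 then (1:ℝ) else 0)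
        + (α*β) * ((if a = 0 then (1:ℝ) else 0) * (if y - a = 0 then 1 else 0)) := by
    intro a; unfold berA; rw [← hc]; ring
  rw [Finset.sum_congr rfl (fun a _ => expand a)]
  rw [Finset.sum_add_distrib, Finset.sum_add_distrib, Finset.sum_add_distrib,
    ← Finset.mul_sum, ← Finset.mul_sum, ← Finset.mul_sum, h1, h2, h3,
    Finset.sum_const, nsmul_eq_mul, Finset.card_univ]
  have hqc : (Fintype.card F : ℝ) * c = 1 := by
    rw [hc]; field_simp
  unfold berA; rw [← hc]
  split <;> linear_combination ((1 - α - β + α * β) * c) * hqc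

section
variable (F : Type*) [Fintype F] [DecidableEq F] [AddCommGroup F]

lemma T_succ (n : ℕ) (y : F) (f : F → ℝ) :
    ∑ v ∈ Finset.univ.filter (fun v : Fin (n+1) → F => ∑ i, v i = y), ∏ i, f (v i)
    = ∑ a : F, f a *
        ∑ w ∈ Finset.univ.filter (fun w : Fin n → F => ∑ i, w i = y - a), ∏ i, f (w i) := by
  simp only [Finset.sum_filter]
  rw [← Fintype.sum_equiv ((Fin.consEquiv (fun _ : Fin (n+1) => F)))
      (fun z => if ∑ i, (Fin.cons z.1 z.2 : Fin (n+1) → F) i = y then ∏ i, f ((Fin.cons z.1 z.2 : Fin (n+1) → F) i) else 0)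
      (fun v => if ∑ i, v i = y then ∏ i, f (v i) else 0) (fun z => rfl)]
  rw [Fintype.sum_prod_type]
  refine Finset.sum_congr rfl (fun a _ => ?_)
  rw [Finset.mul_sum]
  refine Finset.sum_congr rfl (fun w _ => ?_)
  simp only [Fin.prod_univ_succ, Fin.sum_univ_succ, Fin.cons_zero, Fin.cons_succ]
  have h : (a + ∑ i, w i = y) ↔ (∑ i, w i = y - a) := by
    rw [eq_sub_iff_add_eq, add_comm]
  simp only [h, mul_ite, mul_zero]

lemma num_succ (n : ℕ) (x : F) (f : F → ℝ) :
    ∑ v ∈ Finset.univ.filter (fun v : Fin (n+1) → F => (∑ i, v i = 0) ∧ v ⟨0, Nat.succ_pos n⟩ = x),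
        ∏ i, f (v i)
    = f x * ∑ w ∈ Finset.univ.filter (fun w : Fin n → F => ∑ i, w i = -x), ∏ i, f (w i) := by
  simp only [Finset.sum_filter]
  rw [← Fintype.sum_equiv ((Fin.consEquiv (fun _ : Fin (n+1) => F)))
      (fun z => if (∑ i, (Fin.cons z.1 z.2 : Fin (n+1) → F) i = 0) ∧ (Fin.cons z.1 z.2 : Fin (n+1) → F) ⟨0, Nat.succ_pos n⟩ = x
        then ∏ i, f ((Fin.cons z.1 z.2 : Fin (n+1) → F) i) else 0)
      (fun v => if (∑ i, v i = 0) ∧ v ⟨0, Nat.succ_pos n⟩ = x then ∏ i, f (v i) else 0)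
      (fun z => rfl)]
  rw [Fintype.sum_prod_type]
  rw [Finset.mul_sum]
  rw [Finset.sum_comm]
  refine Finset.sum_congr rfl (fun w _ => ?_)
  have hcond : ∀ a : F,
      ((∑ i, (Fin.cons a w : Fin (n+1) → F) i = 0) ∧
        (Fin.cons a w : Fin (n+1) → F) ⟨0, Nat.succ_pos n⟩ = x)
      ↔ (a = x ∧ ∑ i, w i = -x) := by
    intro a
    have h0 : (Fin.cons a w : Fin (n+1) → F) ⟨0, Nat.succ_pos n⟩ = a := rfl
    rw [h0, Fin.sum_cons]
    constructor
    · rintro ⟨h1, rfl⟩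
      exact ⟨rfl, by linear_combination (norm := abel) h1⟩
    · rintro ⟨rfl, h2⟩
      exact ⟨by rw [h2]; abel, rfl⟩
  simp only [hcond]
  have hprod : ∀ a : F, ∏ i, f ((Fin.cons a w : Fin (n+1) → F) i)
      = f a * ∏ i, f (w i) := by
    intro a
    simp [Fin.prod_univ_succ]
  simp only [hprod, ite_and]
  rw [Finset.sum_ite_eq' Finset.univ x]
  simp [mul_ite]

lemma T_eq (α : ℝ) (n : ℕ) (y : F) :
    ∑ v ∈ Finset.univ.filter (fun v : Fin n → F => ∑ i, v i = y), ∏ i, berA F α (v i)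
      = berA F (α ^ n) y := by
  induction n generalizing y with
  | zero =>
      simp only [Finset.sum_filter]
      rw [Fintype.sum_eq_single (fun _ : Fin 0 => (0:F)) (fun v hv => absurd (funext fun i => i.elim0) hv)]
      simp [berA, eq_comm]
  | succ n ih =>
      rw [T_succ]
      simp only [ih]
      rw [conv, ← pow_succ']
end

/-- The q-ary Bernoulli distribution over a finite field `F`. -/
noncomputable def ber (F : Type*) [Fintype F] [DecidableEq F] [Zero F] (p : ℝ) (x : F) : ℝ :=
  if x = 0 then 1 - p else p / ((Fintype.card F : ℝ) - 1)

/-- Conditional distribution of `e₁` given that the sum of `m` independent q-ary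
Bernoulli(p) variables is zero: each nonzero value has the stated probability, where
`p''` is the `(m-1)`-fold piling-up of `p`. -/
theorem cond_first_given_total_zero (F : Type*) [Field F] [Fintype F] [DecidableEq F]
    (q : ℕ) (hcard : Fintype.card F = q) (hq : 2 ≤ q)
    (p : ℝ) (hp0 : 0 ≤ p) (hp1 : p ≤ ((q : ℝ) - 1) / q)
    (m : ℕ) (hm : 2 ≤ m)
    (p'' : ℝ)
    (hp'' : p'' = ((q : ℝ) - 1) / q -
      ((q : ℝ) - 1) / q * (1 - (q : ℝ) / ((q : ℝ) - 1) * p) ^ (m - 1))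
    (hpos : 0 < ∑ v ∈ Finset.univ.filter (fun v : Fin m → F => ∑ i, v i = 0),
      ∏ i, ber F p (v i)) :
    ∀ x : F, x ≠ 0 →
      (∑ v ∈ Finset.univ.filter (fun v : Fin m → F => (∑ i, v i = 0) ∧ v ⟨0, by omega⟩ = x),
          ∏ i, ber F p (v i)) /
        (∑ v ∈ Finset.univ.filter (fun v : Fin m → F => ∑ i, v i = 0),
          ∏ i, ber F p (v i))
      = p * p'' / (((q : ℝ) - 1) ^ 2 * (1 - p) * (1 - p'') + ((q : ℝ) - 1) * p * p'') := by
  subst hcard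
  intro x hx
  obtain ⟨n, rfl⟩ : ∃ n, m = n + 1 := ⟨m - 1, by omega⟩
  set N : ℝ := (Fintype.card F : ℝ) with hN
  have hN2 : (2:ℝ) ≤ N := by rw [hN]; exact_mod_cast hq
  have hN0 : N ≠ 0 := by linarith
  have hN1 : N - 1 ≠ 0 := by linarith
  set α : ℝ := 1 - N / (N - 1) * p with hα
  have hber : ∀ z : F, ber F p z = berA F α z := fun z => ber_eq_berA F hq p z
  simp only [hber] at hpos ⊢
  rw [T_eq] at hpos
  rw [num_succ F n x (berA F α), T_eq, T_eq]
  -- p'' relation: α ^ n = 1 - N/(N-1) * p''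
  have hmn : (n + 1) - 1 = n := rfl
  rw [hmn] at hp''
  have hαn : α ^ n = 1 - N / (N - 1) * p'' := by
    rw [hp'']; field_simp; ring
  -- value of the numerator factors
  have hv1 : berA F α x = p / (N - 1) := by
    unfold berA; rw [if_neg hx, ← hN, hα]; field_simp; ring
  have hv2 : berA F (α ^ n) (-x) = p'' / (N - 1) := by
    unfold berA
    rw [if_neg (by simpa using hx), ← hN, hαn]; field_simp; ring
  have hD : berA F (α ^ (n+1)) (0:F) = (1 - p) * (1 - p'') + p * p'' / (N - 1) := by
    unfold berA
    rw [if_pos rfl, ← hN, pow_succ, hαn, hα]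
    field_simp; ring
  have hD0 : berA F (α ^ (n+1)) (0:F) ≠ 0 := ne_of_gt hpos
  rw [hv1, hv2, hD]
  have hrden : (N - 1) ^ 2 * (1 - p) * (1 - p'') + (N - 1) * p * p''
      = (N - 1) ^ 2 * ((1 - p) * (1 - p'') + p * p'' / (N - 1)) := by
    field_simp
  rw [hrden]
  have hD0' : (1 - p) * (1 - p'') + p * p'' / (N - 1) ≠ 0 := hD ▸ hD0
  rw [div_mul_div_comm, div_div]
  congr 1
  ring
end
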